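/- Let n ≥ 4 be divisible by 4, let γ := ∏_{i=1}^{n/2} (i, n/2+i) ∈ S_n, and let A be an independent set of B_{n/2} consisting only of even permutations. Let A' := {(σ, σ⁻¹τ) : σ ∈ S_{n/2}, τ ∈ A} ⊆ S_{n/2} × S_{n/2} ⊆ S_n. Then A' ∪ γA' is an independent set of B_n consisting only of even permutations, and |A' ∪ γA'| = 2·(n/2)!·|A|. -/

import Mathlib

/-!
Let `B = {sumCongr σ (σ⁻¹ * τ) : τ ∈ A}` be the block-diagonal lift of `A` to `α ⊕ α` and let
`γ = sumComm α α` exchange the two halves. Every element of `B ∪ γB` is even, since `A` is and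
`γ` is a product of `|α|` transpositions with `|α|` even.

For `x, y` on the same side, `x * y⁻¹` is conjugate to
`sumCongr (σ₁ * σ₂⁻¹) (σ₁⁻¹ * τ₁ * τ₂⁻¹ * σ₂)`. A cycle of this shape lives on one half, so
either `σ₁ = σ₂` and `τ₁ * τ₂⁻¹` is conjugate to a cycle, or the second block is trivial and
`τ₁ * τ₂⁻¹ = σ₁ * σ₂⁻¹` is a cycle; both contradict the independence of `A`.
For `x, y` on different sides, `x * y⁻¹` exchanges the halves and so has no fixed point; a cycle
without fixed points on the `2|α|` points is odd, whereas `x * y⁻¹` is even.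
-/

open Equiv Finset

/-- `A` is an independent set of the Birkhoff graph `B_m`: no two of its elements differ
by a single cycle. -/
def IsIndep {m : ℕ} (A : Finset (Equiv.Perm (Fin m))) : Prop :=
  ∀ σ ∈ A, ∀ τ ∈ A, ¬ (σ * τ⁻¹).IsCycle

namespace Equiv.Perm

variable {α β : Type*}

theorem sumCongr_zpow (a : Perm α) (b : Perm β) (k : ℤ) :
    sumCongr a b ^ k = sumCongr (a ^ k) (b ^ k) :=
  (map_zpow (sumCongrHom α β) (a, b) k).symm

theorem IsCycle.permCongr {f : Perm α} (e : α ≃ β) (hf : f.IsCycle) :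
    (e.permCongr f).IsCycle := by
  obtain ⟨x, hx, hsame⟩ := hf
  refine ⟨e x, by simpa using hx, fun y hy => ?_⟩
  obtain ⟨k, hk⟩ := hsame (y := e.symm y) (by simpa [eq_symm_apply] using hy)
  exact ⟨k, by rw [← e.permCongrHom_coe, ← map_zpow]; simp [hk]⟩

theorem isCycle_permCongr_iff {f : Perm α} (e : α ≃ β) :
    (e.permCongr f).IsCycle ↔ f.IsCycle :=
  ⟨fun h => by simpa [← permCongr_symm] using h.permCongr e.symm, IsCycle.permCongr e⟩

theorem IsCycle.sumCongr_of_apply_inl_ne {a : Perm α} {b : Perm β} {x : α}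
    (h : (sumCongr a b).IsCycle) (hx : a x ≠ x) : a.IsCycle ∧ b = 1 := by
  have reach : ∀ z, sumCongr a b z ≠ z → ∃ k : ℤ, Sum.inl ((a ^ k) x) = z := fun z hz => by
    obtain ⟨k, hk⟩ := h.exists_zpow_eq (x := Sum.inl x) (by simpa using hx) hz
    exact ⟨k, by simpa [sumCongr_zpow] using hk⟩
  refine ⟨⟨x, hx, fun y hy => ?_⟩, ?_⟩
  · obtain ⟨k, hk⟩ := reach (Sum.inl y) (by simpa using hy)
    exact ⟨k, Sum.inl_injective hk⟩
  · ext y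
    by_contra hy
    obtain ⟨k, hk⟩ := reach (Sum.inr y) (by simpa using hy)
    exact Sum.inl_ne_inr hk

theorem IsCycle.of_sumCongr {a : Perm α} {b : Perm β} (h : (sumCongr a b).IsCycle) :
    (a.IsCycle ∧ b = 1) ∨ (a = 1 ∧ b.IsCycle) := by
  obtain ⟨z, hz, -⟩ := id h
  rcases z with x | y
  · exact .inl (h.sumCongr_of_apply_inl_ne (by simpa using hz))
  · have hswap : (sumCongr b a).IsCycle := by
      convert h.permCongr (sumComm α β) using 1
      ext (z | z) <;> simp
    exact .inr (hswap.sumCongr_of_apply_inl_ne (by simpa using hz)).symm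

variable [Fintype α] [DecidableEq α]

theorem sign_sumComm : sign (sumComm α α) = (-1) ^ Fintype.card α := by
  have hprod : sumComm α α =
      (boolProdEquivSum α).permCongr (prodCongrLeft fun _ => swap false true) := by
    ext (x | x) <;> simp
  rw [hprod, sign_permCongr, sign_prodCongrLeft, prod_const, sign_swap (by decide), card_univ]

theorem not_isCycle_sumComm_mul_sumCongr {a b : Perm α}
    (h : sign (sumComm α α * sumCongr a b) = 1) :
    ¬ IsCycle (sumComm α α * sumCongr a b) := by
  intro hc
  have hsupp : support (sumComm α α * sumCongr a b) = univ := by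
    ext (x | x) <;> simp
  rw [hc.sign, hsupp, card_univ, Fintype.card_sum, Even.neg_one_pow ⟨_, rfl⟩] at h
  exact absurd h (by decide)

end Equiv.Perm

section BlockLift

variable {α : Type*} [Fintype α] [DecidableEq α]

def blockLift (A : Finset (Perm α)) : Finset (Perm (α ⊕ α)) :=
  (univ ×ˢ A).image fun p => Perm.sumCongr p.1 (p.1⁻¹ * p.2)

theorem mem_blockLift {A : Finset (Perm α)} {x : Perm (α ⊕ α)} :
    x ∈ blockLift A ↔ ∃ σ, ∃ τ ∈ A, Perm.sumCongr σ (σ⁻¹ * τ) = x := by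
  simp [blockLift]

theorem card_blockLift (A : Finset (Perm α)) :
    (blockLift A).card = (Fintype.card α).factorial * A.card := by
  rw [blockLift, card_image_of_injective, card_product, card_univ, Fintype.card_perm]
  rintro ⟨σ₁, τ₁⟩ ⟨σ₂, τ₂⟩ h
  obtain ⟨rfl, h⟩ := Prod.ext_iff.mp <| Perm.sumCongrHom_injective (α := α) (β := α)
    (a₁ := (σ₁, σ₁⁻¹ * τ₁)) (a₂ := (σ₂, σ₂⁻¹ * τ₂)) h
  simpa using h

theorem sign_of_mem_blockLift {A : Finset (Perm α)} (hA : ∀ τ ∈ A, Perm.sign τ = 1)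
    {x : Perm (α ⊕ α)} (hx : x ∈ blockLift A) : Perm.sign x = 1 := by
  obtain ⟨σ, τ, hτ, rfl⟩ := mem_blockLift.mp hx
  rw [Perm.sign_sumCongr, map_mul, Perm.sign_inv, hA τ hτ, mul_one, Int.units_mul_self]

theorem not_isCycle_mul_inv_of_mem_blockLift {A : Finset (Perm α)}
    (hA : ∀ τ₁ ∈ A, ∀ τ₂ ∈ A, ¬ (τ₁ * τ₂⁻¹).IsCycle) {x y : Perm (α ⊕ α)}
    (hx : x ∈ blockLift A) (hy : y ∈ blockLift A) : ¬ (x * y⁻¹).IsCycle := by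
  obtain ⟨σ₁, τ₁, hτ₁, rfl⟩ := mem_blockLift.mp hx
  obtain ⟨σ₂, τ₂, hτ₂, rfl⟩ := mem_blockLift.mp hy
  rw [Perm.sumCongr_inv, Perm.sumCongr_mul]
  intro hc
  apply hA τ₁ hτ₁ τ₂ hτ₂
  rcases hc.of_sumCongr with ⟨hσ, hτ⟩ | ⟨hσ, hτ⟩
  · have : τ₁ * τ₂⁻¹ = σ₁ * σ₂⁻¹ :=
      calc τ₁ * τ₂⁻¹ = σ₁ * (σ₁⁻¹ * τ₁ * (σ₂⁻¹ * τ₂)⁻¹) * σ₂⁻¹ := by group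
        _ = σ₁ * σ₂⁻¹ := by rw [hτ, mul_one]
    rwa [this]
  · obtain rfl := mul_inv_eq_one.mp hσ
    convert hτ.conj (g := σ₁) using 1
    group

theorem not_isCycle_sumComm_mul_mul_inv_of_mem_blockLift (hcard : Even (Fintype.card α))
    {A : Finset (Perm α)} (hA : ∀ τ ∈ A, Perm.sign τ = 1) {x y : Perm (α ⊕ α)}
    (hx : x ∈ blockLift A) (hy : y ∈ blockLift A) :
    ¬ Perm.IsCycle (sumComm α α * x * y⁻¹) := by
  have hsign : Perm.sign (sumComm α α * x * y⁻¹) = 1 := by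
    rw [map_mul, map_mul, Perm.sign_inv, Perm.sign_sumComm, hcard.neg_one_pow,
      sign_of_mem_blockLift hA hx, sign_of_mem_blockLift hA hy, one_mul, one_mul]
  obtain ⟨σ₁, τ₁, -, rfl⟩ := mem_blockLift.mp hx
  obtain ⟨σ₂, τ₂, -, rfl⟩ := mem_blockLift.mp hy
  rw [mul_assoc, Perm.sumCongr_inv, Perm.sumCongr_mul] at hsign ⊢
  exact Perm.not_isCycle_sumComm_mul_sumCongr hsign

def doubledBlockLift (A : Finset (Perm α)) : Finset (Perm (α ⊕ α)) :=
  blockLift A ∪ (blockLift A).image ((sumComm α α : Perm (α ⊕ α)) * ·)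

theorem mem_doubledBlockLift {A : Finset (Perm α)} {x : Perm (α ⊕ α)} :
    x ∈ doubledBlockLift A ↔ x ∈ blockLift A ∨ ∃ y ∈ blockLift A, sumComm α α * y = x := by
  simp only [doubledBlockLift, mem_union, mem_image]

theorem sign_of_mem_doubledBlockLift (hcard : Even (Fintype.card α)) {A : Finset (Perm α)}
    (hA : ∀ τ ∈ A, Perm.sign τ = 1) {x : Perm (α ⊕ α)} (hx : x ∈ doubledBlockLift A) :
    Perm.sign x = 1 := by
  rcases mem_doubledBlockLift.mp hx with hx | ⟨y, hy, rfl⟩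
  · exact sign_of_mem_blockLift hA hx
  · rw [map_mul, Perm.sign_sumComm, hcard.neg_one_pow, sign_of_mem_blockLift hA hy, one_mul]

theorem not_isCycle_mul_inv_of_mem_doubledBlockLift (hcard : Even (Fintype.card α))
    {A : Finset (Perm α)} (hsign : ∀ τ ∈ A, Perm.sign τ = 1)
    (hind : ∀ τ₁ ∈ A, ∀ τ₂ ∈ A, ¬ (τ₁ * τ₂⁻¹).IsCycle) {x y : Perm (α ⊕ α)}
    (hx : x ∈ doubledBlockLift A) (hy : y ∈ doubledBlockLift A) : ¬ (x * y⁻¹).IsCycle := by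
  rcases mem_doubledBlockLift.mp hx with hxB | ⟨x, hxB, rfl⟩ <;>
    rcases mem_doubledBlockLift.mp hy with hyB | ⟨y, hyB, rfl⟩
  · exact not_isCycle_mul_inv_of_mem_blockLift hind hxB hyB
  · rw [← Perm.isCycle_inv, mul_inv_rev, inv_inv]
    exact not_isCycle_sumComm_mul_mul_inv_of_mem_blockLift hcard hsign hyB hxB
  · exact not_isCycle_sumComm_mul_mul_inv_of_mem_blockLift hcard hsign hxB hyB
  · intro hc
    apply not_isCycle_mul_inv_of_mem_blockLift hind hxB hyB
    convert hc.conj (g := (sumComm α α : Perm (α ⊕ α))⁻¹) using 1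
    group

theorem card_doubledBlockLift [Nonempty α] (A : Finset (Perm α)) :
    (doubledBlockLift A).card = 2 * (Fintype.card α).factorial * A.card := by
  have hdisj : Disjoint (blockLift A) ((blockLift A).image ((sumComm α α : Perm (α ⊕ α)) * ·)) := by
    rw [disjoint_left]
    intro x hx hx'
    obtain ⟨y, hy, rfl⟩ := mem_image.mp hx'
    obtain ⟨σ₁, τ₁, -, hx⟩ := mem_blockLift.mp hx
    obtain ⟨σ₂, τ₂, -, rfl⟩ := mem_blockLift.mp hy
    obtain ⟨a⟩ := ‹Nonempty α›
    simpa using Equiv.congr_fun hx (Sum.inl a)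
  rw [doubledBlockLift, card_union_of_disjoint hdisj,
    card_image_of_injective _ (mul_right_injective _), card_blockLift]
  ring

end BlockLift

theorem isIndep_image_permCongr {β : Type*} {m : ℕ} (e : β ≃ Fin m) {S : Finset (Perm β)}
    (hS : ∀ x ∈ S, ∀ y ∈ S, ¬ (x * y⁻¹).IsCycle) : IsIndep (S.image e.permCongr) := by
  simp only [IsIndep, forall_mem_image]
  intro x hx y hy
  rw [← e.permCongrHom_coe, ← map_inv, ← map_mul, e.permCongrHom_coe, Perm.isCycle_permCongr_iff]
  exact hS x hx y hy

/-- improved independent set construction when `4 ∣ n`. -/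
theorem stmt14 (n : ℕ) (hn4 : 4 ∣ n) (hn : 4 ≤ n)
    (A : Finset (Equiv.Perm (Fin (n / 2))))
    (hsign : ∀ τ ∈ A, Equiv.Perm.sign τ = 1)
    (hind : IsIndep A) :
    let e : Fin (n / 2) ⊕ Fin (n / 2) ≃ Fin n := finSumFinEquiv.trans (finCongr (by omega))
    let γ : Equiv.Perm (Fin n) :=
      e.permCongr (Equiv.sumComm (Fin (n / 2)) (Fin (n / 2)))
    let A' : Finset (Equiv.Perm (Fin n)) :=
      (Finset.univ ×ˢ A).image fun st => e.permCongr (Equiv.sumCongr st.1 (st.1⁻¹ * st.2))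
    IsIndep (A' ∪ A'.image (fun τ => γ * τ)) ∧
    (∀ τ ∈ A' ∪ A'.image (fun τ => γ * τ), Equiv.Perm.sign τ = 1) ∧
    (A' ∪ A'.image (fun τ => γ * τ)).card = 2 * (n / 2).factorial * A.card := by
  intro e γ A'
  have hdoubled : A' ∪ A'.image (γ * ·) = (doubledBlockLift A).image e.permCongr := by
    simp only [doubledBlockLift, blockLift, image_union, image_image, A', γ]
    congr 2
    funext p
    exact (e.permCongr_mul _ _).symm
  have hcard : Even (Fintype.card (Fin (n / 2))) := by
    obtain ⟨k, rfl⟩ := hn4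
    exact ⟨k, by simp; omega⟩
  have : Nonempty (Fin (n / 2)) := ⟨⟨0, by omega⟩⟩
  rw [hdoubled]
  refine ⟨isIndep_image_permCongr e fun x hx y hy =>
      not_isCycle_mul_inv_of_mem_doubledBlockLift hcard hsign hind hx hy, ?_, ?_⟩
  · simp only [forall_mem_image, Perm.sign_permCongr]
    exact fun x hx => sign_of_mem_doubledBlockLift hcard hsign hx
  · rw [card_image_of_injective _ e.permCongr.injective, card_doubledBlockLift, Fintype.card_fin]
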